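/- Let H be a complex Hilbert space, let T be a bounded linear operator on H, and let r > 0. Define F(T,r) to be the set of all η ∈ H for which there exists a sequence (η_n)_{n≥1} in H with lim_{n→∞} ‖T^n η_n − η‖ = 0 and limsup_{n→∞} ‖η_n‖^{1/n} ≤ 1/r. Then F(T,r) is a closed linear subspace of H, and for every bounded linear operator S on H with ST = TS one has S(F(T,r)) ⊆ F(T,r). -/

import Mathlib

open Filter
open scoped ENNReal NNReal

/-- The Haagerup–Schultz co-growth subspace `F(T,r)`. -/
def cogrowthSubspace {H : Type*} [NormedAddCommGroup H] [InnerProductSpace ℂ H]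
    (T : H →L[ℂ] H) (r : ℝ) : Set H :=
  {η : H | ∃ u : ℕ → H,
    Tendsto (fun n => ‖(T ^ n) (u n) - η‖) atTop (nhds 0) ∧
    Filter.limsup (fun n => (‖u n‖₊ : ℝ≥0∞) ^ (1 / (n : ℝ))) atTop ≤
      ENNReal.ofReal (1 / r)}

/-!
An element `η` lies in `F(T,r)` iff for every `c > 1/r` and `ε > 0`, for all large `n`,
`η` is within `ε` of `T ^ n ξ` for some `ξ` with `‖ξ‖ ≤ c ^ n`; a diagonal argument over
`(c, ε) → (1/r, 0)` turns these approximants back into a single sequence. In this form, a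
constant factor `C` in both bounds is harmless (it is absorbed by shrinking `ε` and by
comparing `C c'ⁿ` with `cⁿ` for `c' < c`), and closedness, additivity and invariance under
operators commuting with `T` each cost at most such a constant.
-/

theorem exists_tendsto_atTop_eventually_of_forall {P : ℕ → ℕ → Prop}
    (h : ∀ k, ∀ᶠ n in atTop, P k n) :
    ∃ φ : ℕ → ℕ, Tendsto φ atTop atTop ∧ ∀ᶠ n in atTop, P (φ n) n := by
  choose N hN using fun k => eventually_atTop.1 (h k)
  refine ⟨fun n => Nat.findGreatest (fun k => N k ≤ n) n, ?_, ?_⟩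
  · exact tendsto_atTop_atTop.2 fun k => ⟨max k (N k), fun n hn =>
      Nat.le_findGreatest (le_of_max_le_left hn) (le_of_max_le_right hn)⟩
  · exact eventually_atTop.2 ⟨N 0, fun n hn =>
      hN _ _ (Nat.findGreatest_spec (P := fun k => N k ≤ n) n.zero_le hn)⟩

theorem NNReal.eventually_mul_pow_le_pow {a b : ℝ≥0} (hab : a < b) (C : ℝ≥0) :
    ∀ᶠ n in atTop, C * a ^ n ≤ b ^ n := by
  have hb : b ≠ 0 := (pos_of_gt hab).ne'
  have hlim : Tendsto (fun n : ℕ => C * (a / b) ^ n) atTop (nhds 0) := by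
    simpa using (NNReal.tendsto_pow_atTop_nhds_zero_of_lt_one
      ((div_lt_one (pos_of_gt hab)).2 hab)).const_mul C
  filter_upwards [hlim.eventually (ge_mem_nhds one_pos)] with n hn
  calc C * a ^ n = C * (a / b) ^ n * b ^ n := by
        rw [div_pow, mul_assoc, div_mul_cancel₀ _ (pow_ne_zero n hb)]
    _ ≤ b ^ n := mul_le_of_le_one_left zero_le hn

theorem ENNReal.coe_rpow_one_div_le_coe_iff {x c : ℝ≥0} {n : ℕ} (hn : n ≠ 0) :
    (x : ℝ≥0∞) ^ (1 / (n : ℝ)) ≤ c ↔ x ≤ c ^ n := by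
  rw [one_div, ENNReal.rpow_inv_le_iff (by positivity), ENNReal.rpow_natCast]
  norm_cast

theorem ENNReal.limsup_rpow_one_div_le_iff {a : ℕ → ℝ≥0} {ρ : ℝ≥0∞} :
    limsup (fun n => (a n : ℝ≥0∞) ^ (1 / (n : ℝ))) atTop ≤ ρ ↔
      ∀ c : ℝ≥0, ρ < c → ∀ᶠ n in atTop, a n ≤ c ^ n := by
  constructor
  · intro h c hc
    filter_upwards [eventually_lt_of_limsup_lt (h.trans_lt hc), eventually_ne_atTop 0]
      with n hn hn0
    exact (coe_rpow_one_div_le_coe_iff hn0).1 hn.le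
  · intro h
    refine le_of_forall_gt_imp_ge_of_dense fun b hb => ?_
    obtain ⟨c, hρc, hcb⟩ := ENNReal.lt_iff_exists_nnreal_btwn.1 hb
    refine (limsup_le_of_le (by isBoundedDefault) ?_).trans hcb.le
    filter_upwards [h c hρc, eventually_ne_atTop 0] with n hn hn0
    exact (coe_rpow_one_div_le_coe_iff hn0).2 hn

section Cogrowth

variable {H : Type*} [NormedAddCommGroup H] [InnerProductSpace ℂ H] {T : H →L[ℂ] H} {r : ℝ}
  {η : H}

theorem mem_cogrowthSubspace_iff :
    η ∈ cogrowthSubspace T r ↔ ∀ c : ℝ≥0, ENNReal.ofReal (1 / r) < c → ∀ ε > 0,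
      ∀ᶠ n in atTop, ∃ ξ : H, ‖(T ^ n) ξ - η‖ ≤ ε ∧ ‖ξ‖₊ ≤ c ^ n := by
  constructor
  · rintro ⟨u, hu, hlim⟩ c hc ε hε
    filter_upwards [hu.eventually (Iic_mem_nhds hε),
      ENNReal.limsup_rpow_one_div_le_iff.1 hlim c hc] with n h₁ h₂
    exact ⟨u n, h₁, h₂⟩
  · intro h
    obtain ⟨c, -, hρc, hc⟩ := exists_seq_strictAnti_tendsto (1 / r).toNNReal
    obtain ⟨ε, -, hε, hε0⟩ := exists_seq_strictAnti_tendsto (0 : ℝ)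
    obtain ⟨φ, hφ, hP⟩ := exists_tendsto_atTop_eventually_of_forall fun k =>
      h (c k) (ENNReal.coe_lt_coe.2 (hρc k)) (ε k) (hε k)
    obtain ⟨u, hu⟩ := hP.choice
    refine ⟨u, ?_, ENNReal.limsup_rpow_one_div_le_iff.2 fun b hb => ?_⟩
    · exact squeeze_zero' (Eventually.of_forall fun n => norm_nonneg _)
        (hu.mono fun n hn => hn.1) (hε0.comp hφ)
    · filter_upwards [hu, (hc.comp hφ).eventually (gt_mem_nhds (ENNReal.coe_lt_coe.1 hb))]
        with n hn hcb
      exact hn.2.trans (pow_le_pow_left₀ zero_le hcb.le n)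

theorem mem_cogrowthSubspace_of_approx (C : ℝ≥0)
    (h : ∀ c : ℝ≥0, ENNReal.ofReal (1 / r) < c → ∀ ε > 0,
      ∀ᶠ n in atTop, ∃ ξ : H, ‖(T ^ n) ξ - η‖ ≤ C * ε ∧ ‖ξ‖₊ ≤ C * c ^ n) :
    η ∈ cogrowthSubspace T r := by
  refine mem_cogrowthSubspace_iff.2 fun c hc ε hε => ?_
  obtain ⟨c', hc', hc'c⟩ := ENNReal.lt_iff_exists_nnreal_btwn.1 hc
  have hCε : (C : ℝ) * (ε / (C + 1)) ≤ ε := by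
    rw [← mul_div_assoc, div_le_iff₀ (by positivity)]
    nlinarith
  filter_upwards [h c' hc' (ε / (C + 1)) (by positivity),
    NNReal.eventually_mul_pow_le_pow (ENNReal.coe_lt_coe.1 hc'c) C] with n ⟨ξ, h₁, h₂⟩ hn
  exact ⟨ξ, h₁.trans hCε, h₂.trans hn⟩

theorem zero_mem_cogrowthSubspace : (0 : H) ∈ cogrowthSubspace T r :=
  mem_cogrowthSubspace_iff.2 fun _ _ _ hε => Eventually.of_forall fun _ =>
    ⟨0, by simpa using hε.le, by simp⟩

theorem add_mem_cogrowthSubspace {ξ : H} (hξ : ξ ∈ cogrowthSubspace T r)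
    (hη : η ∈ cogrowthSubspace T r) : ξ + η ∈ cogrowthSubspace T r := by
  refine mem_cogrowthSubspace_of_approx 2 fun c hc ε hε => ?_
  filter_upwards [mem_cogrowthSubspace_iff.1 hξ c hc ε hε,
    mem_cogrowthSubspace_iff.1 hη c hc ε hε] with n ⟨ξ', h₁, h₂⟩ ⟨η', h₃, h₄⟩
  refine ⟨ξ' + η', ?_, (nnnorm_add_le _ _).trans (two_mul (c ^ n) ▸ add_le_add h₂ h₄)⟩
  rw [map_add, add_sub_add_comm]
  exact (norm_add_le _ _).trans ((add_le_add h₁ h₃).trans_eq (by push_cast; ring))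

theorem apply_mem_cogrowthSubspace_of_commute {S : H →L[ℂ] H} (hST : Commute S T)
    (hη : η ∈ cogrowthSubspace T r) : S η ∈ cogrowthSubspace T r := by
  refine mem_cogrowthSubspace_of_approx ‖S‖₊ fun c hc ε hε => ?_
  filter_upwards [mem_cogrowthSubspace_iff.1 hη c hc ε hε] with n ⟨ξ, h₁, h₂⟩
  refine ⟨S ξ, ?_, (S.le_opNNNorm ξ).trans (by gcongr)⟩
  have hcomm : S ((T ^ n) ξ) = (T ^ n) (S ξ) := DFunLike.congr_fun (hST.pow_right n).eq ξ
  rw [← hcomm, ← map_sub, coe_nnnorm]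
  exact (S.le_opNorm _).trans (mul_le_mul_of_nonneg_left h₁ (norm_nonneg S))

theorem smul_mem_cogrowthSubspace (a : ℂ) (hη : η ∈ cogrowthSubspace T r) :
    a • η ∈ cogrowthSubspace T r := by
  simpa using apply_mem_cogrowthSubspace_of_commute ((Commute.one_left T).smul_left a) hη

theorem isClosed_cogrowthSubspace : IsClosed (cogrowthSubspace T r) := by
  refine isClosed_of_closure_subset fun η hη =>
    mem_cogrowthSubspace_of_approx 2 fun c hc ε hε => ?_
  obtain ⟨η', hη', hdist⟩ := Metric.mem_closure_iff.1 hη ε hε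
  filter_upwards [mem_cogrowthSubspace_iff.1 hη' c hc ε hε] with n ⟨ξ, h₁, h₂⟩
  refine ⟨ξ, ?_, h₂.trans (le_mul_of_one_le_left zero_le one_le_two)⟩
  calc ‖(T ^ n) ξ - η‖ ≤ ‖(T ^ n) ξ - η'‖ + ‖η' - η‖ := norm_sub_le_norm_sub_add_norm_sub _ _ _
    _ ≤ ε + ε := add_le_add h₁ (dist_eq_norm' η η' ▸ hdist.le)
    _ = 2 * ε := (two_mul ε).symm

end Cogrowth

theorem stmt9_general {H : Type*} [NormedAddCommGroup H] [InnerProductSpace ℂ H]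
    (T : H →L[ℂ] H) (r : ℝ) :
    IsClosed (cogrowthSubspace T r) ∧
    (0 : H) ∈ cogrowthSubspace T r ∧
    (∀ ξ η : H, ξ ∈ cogrowthSubspace T r → η ∈ cogrowthSubspace T r →
      ξ + η ∈ cogrowthSubspace T r) ∧
    (∀ (c : ℂ) (η : H), η ∈ cogrowthSubspace T r → c • η ∈ cogrowthSubspace T r) ∧
    (∀ S : H →L[ℂ] H, S * T = T * S →
      ∀ η ∈ cogrowthSubspace T r, S η ∈ cogrowthSubspace T r) :=
  ⟨isClosed_cogrowthSubspace, zero_mem_cogrowthSubspace,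
    fun _ _ => add_mem_cogrowthSubspace, fun c _ => smul_mem_cogrowthSubspace c,
    fun _ hST _ => apply_mem_cogrowthSubspace_of_commute hST⟩

/-- `F(T,r)` is a closed linear subspace, invariant under every bounded operator
commuting with `T` (i.e. `T`-hyperinvariant). -/
theorem stmt9 {H : Type*} [NormedAddCommGroup H] [InnerProductSpace ℂ H] [CompleteSpace H]
    (T : H →L[ℂ] H) (r : ℝ) (hr : 0 < r) :
    IsClosed (cogrowthSubspace T r) ∧
    (0 : H) ∈ cogrowthSubspace T r ∧
    (∀ ξ η : H, ξ ∈ cogrowthSubspace T r → η ∈ cogrowthSubspace T r →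
      ξ + η ∈ cogrowthSubspace T r) ∧
    (∀ (c : ℂ) (η : H), η ∈ cogrowthSubspace T r → c • η ∈ cogrowthSubspace T r) ∧
    (∀ S : H →L[ℂ] H, S * T = T * S →
      ∀ η ∈ cogrowthSubspace T r, S η ∈ cogrowthSubspace T r) :=
  stmt9_general T r
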